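/- P̄ is an outer measure with total mass one: P̄ is nondecreasing (A ⊆ A' implies P̄(A) ≤ P̄(A')), countably subadditive (P̄(⋃_n A_n) ≤ Σ_n P̄(A_n)), satisfies P̄(∅) = 0, and P̄(Ω^qv) = 1. -/

import Mathlib

open MeasureTheory ProbabilityTheory Filter Topology Set
open scoped ENNReal NNReal Classical

noncomputable section

/-- The space of continuous paths on `[0,∞)` started at `0`, modeled as continuous
functions on `ℝ` which vanish on `(-∞,0]`, endowed with the topology of locally
uniform convergence and its Borel σ-algebra. -/
def PathSpace : Type := {ω : ℝ → ℝ // Continuous ω ∧ ∀ t ≤ 0, ω t = 0}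

instance : TopologicalSpace PathSpace :=
  TopologicalSpace.induced (fun ω : PathSpace => (⟨ω.1, ω.2.1⟩ : C(ℝ, ℝ))) inferInstance

instance : MeasurableSpace PathSpace := borel PathSpace
instance : BorelSpace PathSpace := ⟨rfl⟩

namespace RF

/-- The coordinate (canonical) process. -/
def eval (t : ℝ) (ω : PathSpace) : ℝ := ω.1 t

/-- The natural (raw) filtration generated by the coordinate process. -/
def natFilt (t : ℝ) : MeasurableSpace PathSpace :=
  ⨆ (s : ℝ) (_ : s ≤ t), MeasurableSpace.comap (eval s) inferInstance

/-- The path `ω` stopped at time `t`. -/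
def stoppedPath (ω : PathSpace) (t : ℝ) : PathSpace :=
  ⟨fun s => ω.1 (min s t), ω.2.1.comp (continuous_id.min continuous_const),
    fun s hs => ω.2.2 _ (le_trans (min_le_left _ _) hs)⟩

/-- Concatenation: follow `ω` up to time `t`, then continue with the increments of `ω'`. -/
def concat (ω : PathSpace) (t : ℝ) (ω' : PathSpace) : PathSpace :=
  ⟨fun r => if r ≤ max t 0 then ω.1 r else ω.1 (max t 0) + ω'.1 (r - max t 0), by
    constructor
    · refine Continuous.if_le ω.2.1 ?_ continuous_id continuous_const ?_
      · exact continuous_const.add (ω'.2.1.comp (continuous_id.sub continuous_const))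
      · intro x hx; rw [hx, sub_self, ω'.2.2 0 le_rfl, add_zero]
    · intro r hr
      have h1 : r ≤ max t 0 := le_trans hr (le_max_right t 0)
      simp only [h1, if_true]
      exact ω.2.2 r hr⟩

/-- The "concatenation version" of the conditional expectation
`E_W[X | F_t](ω) = ∫ X((ω↾[0,t]) ⊕ ω') W(dω')`. -/
def condExpW (W : Measure PathSpace) (X : PathSpace → ℝ) (t : ℝ) (ω : PathSpace) : ℝ :=
  ∫ ω', X (concat ω t ω') ∂W

/-- `W` is the Wiener measure: a probability measure under which the coordinate process
has independent centered Gaussian increments. -/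
def IsWienerMeasure (W : Measure PathSpace) : Prop :=
  IsProbabilityMeasure W ∧
  (∀ s t : ℝ, 0 ≤ s → s ≤ t →
    Measure.map (fun ω => eval t ω - eval s ω) W = gaussianReal 0 ((t - s).toNNReal)) ∧
  (∀ (n : ℕ) (ts : ℕ → ℝ), (∀ i, 0 ≤ ts i) → Monotone ts →
    iIndepFun
      (fun i : Fin n => fun ω => eval (ts (i.1 + 1)) ω - eval (ts i.1) ω) W)

/-- A simple trading strategy on the (infinite horizon) path space: a sequence of
strictly increasing stopping times `τ 0 = 0 < τ 1 < ⋯ → ∞` of the natural filtration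
together with bounded position functions `F n` which depend on the path stopped at `τ n`. -/
structure SimpleStrategy where
  τ : ℕ → PathSpace → ℝ
  F : ℕ → PathSpace → ℝ
  tau_zero : ∀ ω, τ 0 ω = 0
  tau_lt : ∀ n ω, τ n ω < τ (n + 1) ω
  tau_tendsto : ∀ ω, Tendsto (fun n => τ n ω) atTop atTop
  tau_stopping : ∀ n t, MeasurableSet[natFilt t] {ω | τ n ω ≤ t}
  F_meas : ∀ n, @Measurable _ _
    (MeasurableSpace.comap (fun ω => stoppedPath ω (τ n ω)) inferInstance) _ (F n)
  F_bdd : ∀ n, ∃ C, ∀ ω, |F n ω| ≤ C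

/-- The capital process `(H ⬝ B)_t` of a simple strategy. -/
def capital (H : SimpleStrategy) (t : ℝ) (ω : PathSpace) : ℝ :=
  ∑' n, H.F n ω * (ω.1 (min (H.τ (n + 1) ω) t) - ω.1 (min (H.τ n ω) t))

/-- A simple trading strategy on the finite horizon `[0,T]`: the stopping times increase
to the terminal time `T`. -/
structure SimpleStrategyOn (T : ℝ) where
  τ : ℕ → PathSpace → ℝ
  F : ℕ → PathSpace → ℝ
  tau_zero : ∀ ω, τ 0 ω = 0
  tau_lt : ∀ n ω, τ n ω < τ (n + 1) ω
  tau_tendsto : ∀ ω, Tendsto (fun n => τ n ω) atTop (𝓝 T)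
  tau_stopping : ∀ n t, MeasurableSet[natFilt t] {ω | τ n ω ≤ t}
  F_meas : ∀ n, @Measurable _ _
    (MeasurableSpace.comap (fun ω => stoppedPath ω (τ n ω)) inferInstance) _ (F n)
  F_bdd : ∀ n, ∃ C, ∀ ω, |F n ω| ≤ C

/-- The capital process of a finite-horizon simple strategy. -/
def capitalOn {T : ℝ} (H : SimpleStrategyOn T) (t : ℝ) (ω : PathSpace) : ℝ :=
  ∑' n, H.F n ω * (ω.1 (min (H.τ (n + 1) ω) t) - ω.1 (min (H.τ n ω) t))

/-- `x` lies on the dyadic grid `2^{-n} ℤ`. -/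
def inDyadic (n : ℕ) (x : ℝ) : Prop := ∃ z : ℤ, x = (z : ℝ) * (2 : ℝ) ^ (-(n : ℤ))

/-- The stopping times `σ^n_k` of successive moves of `ω` across the dyadic grid `2^{-n}ℤ`
(with values in `[0,∞]`). -/
def sigmaTimes (ω : ℝ → ℝ) (n : ℕ) : ℕ → ℝ≥0∞
  | 0 => 0
  | k + 1 =>
    sInf (ENNReal.ofReal '' {u : ℝ | 0 ≤ u ∧ sigmaTimes ω n k ≤ ENNReal.ofReal u ∧
      inDyadic n (ω u) ∧ ω u ≠ ω (sigmaTimes ω n k).toReal})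

/-- The discrete quadratic variation `V^n_t(ω)` along the dyadic stopping times. -/
def discreteQV (ω : ℝ → ℝ) (n : ℕ) (t : ℝ) : ℝ :=
  ∑' k : ℕ, (ω (min (sigmaTimes ω n (k + 1)) (ENNReal.ofReal t)).toReal
      - ω (min (sigmaTimes ω n k) (ENNReal.ofReal t)).toReal) ^ 2

/-- `f` and `g` have the same intervals of constancy (on `[0,∞)`). -/
def SameConstancy (f g : ℝ → ℝ) : Prop :=
  ∀ u v : ℝ, 0 ≤ u → u ≤ v →
    ((∀ x ∈ Icc u v, f x = f u) ↔ ∀ x ∈ Icc u v, g x = g u)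

/-- `A` is the quadratic variation of `ω`: the discrete quadratic variations converge
locally uniformly to the continuous function `A`, which has the same intervals of
constancy as `ω`; moreover either `ω` converges at `∞` or `A` is unbounded. -/
def IsQVLimit (ω : ℝ → ℝ) (A : ℝ → ℝ) : Prop :=
  Continuous A ∧ TendstoLocallyUniformly (fun n => discreteQV ω n) A atTop ∧
  SameConstancy A ω ∧
  ((∃ L, Tendsto ω atTop (𝓝 L)) ∨ ¬ BddAbove (A '' Ici 0))

/-- `ω` admits a quadratic variation in the sense of Vovk. -/
def IsQVPath (ω : PathSpace) : Prop := ∃ A, IsQVLimit ω.1 A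

/-- `Ω^qv`, the set of paths admitting a quadratic variation. -/
def OmegaQV : Set PathSpace := {ω | IsQVPath ω}

/-- The quadratic variation `⟨ω⟩` of a path (junk value `0` off `Ω^qv`). -/
def qvOf (ω : PathSpace) : ℝ → ℝ :=
  if h : IsQVPath ω then h.choose else fun _ => 0

/-- `⟨ω⟩` as a Stieltjes function (junk value off the set where `⟨ω⟩` is monotone
and continuous). -/
def qvStieltjes (ω : PathSpace) : StieltjesFunction ℝ :=
  if h : Monotone (qvOf ω) ∧ Continuous (qvOf ω) then
    { toFun := qvOf ω
      mono' := h.1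
      right_continuous' := fun _ => h.2.continuousAt.continuousWithinAt }
  else
    { toFun := fun _ => 0
      mono' := monotone_const
      right_continuous' := fun _ => continuousWithinAt_const }

/-- `ζ^f_t(ω) = (1/2) ∫_0^t f''(ω_s) d⟨ω⟩_s`, the compensator of `f(ω)` in terms of the
pathwise quadratic variation. -/
def zetaQV (f : ℝ → ℝ) (ω : PathSpace) (t : ℝ) : ℝ :=
  (1 / 2) * ∫ s in Ioc (0 : ℝ) t, deriv (deriv f) (ω.1 s) ∂(qvStieltjes ω).measure

/-- `ζ^f_t(ω) = (1/2) ∫_0^t f''(ω_s) ds` (compensator under Wiener measure). -/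
def zetaLeb (f : ℝ → ℝ) (ω : PathSpace) (t : ℝ) : ℝ :=
  (1 / 2) * ∫ s in (0 : ℝ)..t, deriv (deriv f) (ω.1 s)

/-- `τ_t(ω) = inf{s ≥ 0 : ⟨ω⟩_s > t}` as a set. -/
def nttSet (ω : PathSpace) (t : ℝ) : Set ℝ := {s : ℝ | 0 ≤ s ∧ t < qvOf ω s}

/-- The normalizing time transformation `ntt(ω)_t = ω(τ_t(ω))`, with
`ω(∞) := lim_{s→∞} ω(s)` when `⟨ω⟩` is bounded. -/
def ntt (ω : PathSpace) (t : ℝ) : ℝ :=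
  if (nttSet ω t).Nonempty then ω.1 (sInf (nttSet ω t)) else limUnder atTop ω.1

/-- The normalizing time transformation as a map of the path space
(junk value for paths where `ntt ω` is not a continuous path). -/
def nttPath (ω : PathSpace) : PathSpace :=
  if h : Continuous (ntt ω) ∧ ∀ t ≤ 0, ntt ω t = 0 then ⟨ntt ω, h⟩
  else ⟨fun _ => 0, continuous_const, fun _ _ => rfl⟩

/-- `⟨ω⟩_∞ = ∞`, i.e. the quadratic variation is unbounded. -/
def QVUnbounded (ω : PathSpace) : Prop := ¬ BddAbove (qvOf ω '' Ici 0)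

/-- Vovk-type super-hedging outer expectation (with the modification of
Perkowski–Prömel): the minimal initial capital `λ > 0` such that some sequence of
`λ`-admissible simple strategies super-hedges `X` on `Ω^qv` in the sense of iterated
inferior limits. -/
def Ebar (X : PathSpace → EReal) : ℝ≥0∞ :=
  sInf {l : ℝ≥0∞ | ∃ lam : ℝ, 0 < lam ∧ l = ENNReal.ofReal lam ∧
    ∃ H : ℕ → SimpleStrategy,
      (∀ n (ω : PathSpace) (t : ℝ), ω ∈ OmegaQV → 0 ≤ t → -lam ≤ capital (H n) t ω) ∧
      ∀ ω ∈ OmegaQV, X ω ≤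
        liminf (fun t : ℝ =>
          liminf (fun n : ℕ => ((lam + capital (H n) t ω : ℝ) : EReal)) atTop) atTop}

/-- The outer measure `P̄`. -/
def Pbar (A : Set PathSpace) : ℝ≥0∞ := Ebar (A.indicator fun _ => (1 : EReal))

/-- Vovk's outer measure `Q̄`, defined through countable convex combinations of
admissible simple strategies. -/
def Qbar (A : Set PathSpace) : ℝ≥0∞ :=
  sInf {l : ℝ≥0∞ | ∃ lam : ℝ, 0 < lam ∧ l = ENNReal.ofReal lam ∧
    ∃ (lams : ℕ → ℝ) (H : ℕ → SimpleStrategy),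
      (∀ k, 0 < lams k) ∧ HasSum lams lam ∧
      (∀ k (ω : PathSpace) (t : ℝ), ω ∈ OmegaQV → 0 ≤ t → -(lams k) ≤ capital (H k) t ω) ∧
      ∀ ω ∈ OmegaQV,
        (A.indicator (fun _ => (1 : ℝ≥0∞)) ω) ≤
          liminf (fun t : ℝ => ∑' k, ENNReal.ofReal (lams k + capital (H k) t ω)) atTop}

/-- `C_qv[0,T]`: quadratic-variation paths on `[0,T]` (modeled as paths in `Ω^qv`
which are constant after time `T`). -/
def CQV (T : ℝ) : Set PathSpace := {ω | IsQVPath ω ∧ ∀ t, T ≤ t → ω.1 t = ω.1 T}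

/-- A martingale measure on `C_qv[0,T]`: a probability measure concentrated on
`C_qv[0,T]` under which the coordinate process is a martingale on `[0,T]` for the
natural filtration. -/
def IsMartingaleMeasureOn (T : ℝ) (P : Measure PathSpace) : Prop :=
  IsProbabilityMeasure P ∧ P (CQV T) = 1 ∧
  (∀ t, 0 ≤ t → t ≤ T → Integrable (eval t) P) ∧
  ∀ s t, 0 ≤ s → s ≤ t → t ≤ T → P[eval t | natFilt s] =ᵐ[P] eval s

/-- The (possibly infinite) expectation `E_P[f] ∈ [-∞,∞]` of a real functional. -/
def expE {Ω : Type*} [MeasurableSpace Ω] (P : Measure Ω) (f : Ω → ℝ) : EReal :=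
  ((∫⁻ ω, ENNReal.ofReal (f ω) ∂P : ℝ≥0∞) : EReal)
    - ((∫⁻ ω, ENNReal.ofReal (-(f ω)) ∂P : ℝ≥0∞) : EReal)

/-- The space `Υ` of stopped paths `(f,s)`, realized as pairs with `f` continuous,
constant on `(-∞,0]` and constant on `[s,∞)`. -/
def Upsilon : Set ((ℝ → ℝ) × ℝ) :=
  {p | Continuous p.1 ∧ 0 ≤ p.2 ∧ (∀ t ≤ 0, p.1 t = p.1 0) ∧
    ∀ t, p.2 ≤ t → p.1 t = p.1 p.2}

/-- The distance on stopped paths, assuming `s ≤ t`. -/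
def dUpAux (f : ℝ → ℝ) (s : ℝ) (g : ℝ → ℝ) (t : ℝ) : ℝ :=
  max (t - s) (max (⨆ u : Icc (0 : ℝ) s, |f u - g u|) (⨆ u : Icc s t, |g u - f s|))

/-- The metric `d_Υ` on the space of stopped paths. -/
def dUp (p q : (ℝ → ℝ) × ℝ) : ℝ :=
  if p.2 ≤ q.2 then dUpAux p.1 p.2 q.1 q.2 else dUpAux q.1 q.2 p.1 p.2

/-- The stopped path `(f(· ∧ s), s) ∈ Υ` (with clamping making it canonical). -/
def stoppedAtFun (f : ℝ → ℝ) (s : ℝ) : (ℝ → ℝ) × ℝ :=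
  (fun u => f (min (max u 0) (max s 0)), max s 0)

/-- `γ` is upper semicontinuous on `Υ` with respect to `d_Υ`. -/
def USCUpsilon (γ : (ℝ → ℝ) × ℝ → ℝ) : Prop :=
  ∀ p ∈ Upsilon, ∀ ε : ℝ, 0 < ε → ∃ δ : ℝ, 0 < δ ∧
    ∀ q ∈ Upsilon, dUp p q < δ → γ q < γ p + ε

/-- `τ` is a stopping time of the natural filtration. -/
def IsStoppingTimeN (τ : PathSpace → ℝ) : Prop :=
  ∀ t, MeasurableSet[natFilt t] {ω | τ ω ≤ t}

end RF
namespace RF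

lemma tau_strictMono (H : SimpleStrategy) (ω : PathSpace) : StrictMono fun n => H.τ n ω :=
  strictMono_nat_of_lt_succ fun n => H.tau_lt n ω

lemma tau_mono (H : SimpleStrategy) (ω : PathSpace) {m n : ℕ} (h : m ≤ n) :
    H.τ m ω ≤ H.τ n ω := (tau_strictMono H ω).monotone h

lemma tau_nonneg (H : SimpleStrategy) (n : ℕ) (ω : PathSpace) : 0 ≤ H.τ n ω := by
  have := tau_mono H ω (Nat.zero_le n)
  rwa [H.tau_zero ω] at this

lemma continuous_eval (s : ℝ) : Continuous (eval s) := by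
  have h1 : Continuous fun ω : PathSpace => (⟨ω.1, ω.2.1⟩ : C(ℝ, ℝ)) := continuous_induced_dom
  exact (continuous_eval_const s).comp h1

lemma measurable_eval (s : ℝ) : Measurable (eval s) := (continuous_eval s).measurable

lemma natFilt_le_borel (t : ℝ) : natFilt t ≤ (inferInstance : MeasurableSpace PathSpace) :=
  iSup_le fun s => iSup_le fun _ => (measurable_eval s).comap_le

lemma natFilt_mono {s t : ℝ} (h : s ≤ t) : natFilt s ≤ natFilt t :=
  iSup_le fun v => iSup_le fun hv => le_iSup_of_le v (le_iSup_of_le (hv.trans h) le_rfl)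

lemma stopping_measurable {τ : PathSpace → ℝ}
    (hτ : ∀ t, MeasurableSet[natFilt t] {ω | τ ω ≤ t}) : Measurable τ := by
  apply measurable_of_Iic
  intro x
  exact natFilt_le_borel x _ (hτ x)

lemma continuous_stoppedPath : Continuous fun p : PathSpace × ℝ => stoppedPath p.1 p.2 := by
  apply continuous_induced_rng.2
  have hι : Continuous fun ω : PathSpace => (⟨ω.1, ω.2.1⟩ : C(ℝ, ℝ)) := continuous_induced_dom
  have hm : Continuous fun t : ℝ =>
      (ContinuousMap.curry ⟨fun q : ℝ × ℝ => min q.2 q.1, continuous_snd.min continuous_fst⟩) t :=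
    (ContinuousMap.curry _).continuous
  have hcomp : Continuous fun x : C(ℝ, ℝ) × C(ℝ, ℝ) => x.2.comp x.1 :=
    ContinuousMap.continuous_comp'
  have : ((fun ω : PathSpace => (⟨ω.1, ω.2.1⟩ : C(ℝ, ℝ))) ∘
      (fun p : PathSpace × ℝ => stoppedPath p.1 p.2)) =
      (fun x : C(ℝ, ℝ) × C(ℝ, ℝ) => x.2.comp x.1) ∘
        (fun p : PathSpace × ℝ =>
          (((ContinuousMap.curry ⟨fun q : ℝ × ℝ => min q.2 q.1,
              continuous_snd.min continuous_fst⟩) p.2 : C(ℝ, ℝ)),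
            (⟨p.1.1, p.1.2.1⟩ : C(ℝ, ℝ)))) := by
    funext p
    ext s
    rfl
  rw [this]
  exact hcomp.comp ((hm.comp continuous_snd).prodMk (hι.comp continuous_fst))

lemma measurable_stoppedPath_comp {τ : PathSpace → ℝ} (hτ : Measurable τ) :
    Measurable fun ω => stoppedPath ω (τ ω) :=
  continuous_stoppedPath.measurable.comp (measurable_id.prodMk hτ)

lemma stoppedPath_idem (ω : PathSpace) (a b : ℝ) :
    stoppedPath (stoppedPath ω b) a = stoppedPath ω (min a b) := by
  apply Subtype.ext
  funext s
  show ω.1 (min (min s a) b) = ω.1 (min s (min a b))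
  rw [min_assoc]

lemma natFilt_le_comap_stop (u : ℝ) :
    natFilt u ≤ MeasurableSpace.comap (fun ω => stoppedPath ω u) ⊤ := by
  refine iSup_le fun s => iSup_le fun hs => ?_
  have heq : eval s = (eval s) ∘ (fun ω : PathSpace => stoppedPath ω u) := by
    funext ω
    show ω.1 s = ω.1 (min s u)
    rw [min_eq_left hs]
  calc MeasurableSpace.comap (eval s) inferInstance
      = MeasurableSpace.comap (fun ω : PathSpace => stoppedPath ω u)
          (MeasurableSpace.comap (eval s) inferInstance) := by
        rw [MeasurableSpace.comap_comp, ← heq]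
    _ ≤ MeasurableSpace.comap (fun ω : PathSpace => stoppedPath ω u) ⊤ :=
        MeasurableSpace.comap_mono le_top

lemma natFilt_invariant {u : ℝ} {A : Set PathSpace} (hA : MeasurableSet[natFilt u] A)
    {ω ω' : PathSpace} (h : stoppedPath ω u = stoppedPath ω' u) : ω ∈ A ↔ ω' ∈ A := by
  obtain ⟨B, -, hB⟩ := natFilt_le_comap_stop u A hA
  rw [← hB]
  show stoppedPath ω u ∈ B ↔ stoppedPath ω' u ∈ B
  rw [h]

lemma galmarino {τ : PathSpace → ℝ} (hτ : ∀ t, MeasurableSet[natFilt t] {ω | τ ω ≤ t})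
    {u : ℝ} {ω ω' : PathSpace} (h : stoppedPath ω u = stoppedPath ω' u) (h2 : τ ω ≤ u) :
    τ ω' = τ ω := by
  have key : ∀ v, v ≤ u → (τ ω ≤ v ↔ τ ω' ≤ v) := fun v hv =>
    natFilt_invariant (natFilt_mono hv _ (hτ v)) h
  have h3 : τ ω' ≤ τ ω := (key (τ ω) h2).1 le_rfl
  exact le_antisymm h3 ((key (τ ω') (h3.trans h2)).2 le_rfl)

/-- Galmarino-type: a stopping time is unchanged by stopping the path after it. -/
lemma stopping_stoppedPath_eq {τ : PathSpace → ℝ}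
    (hτ : ∀ t, MeasurableSet[natFilt t] {ω | τ ω ≤ t}) {ω : PathSpace} {u : ℝ}
    (h2 : τ ω ≤ u) : τ (stoppedPath ω u) = τ ω :=
  galmarino hτ ((stoppedPath_idem ω u u).trans (by rw [min_self])).symm h2

lemma stopping_stoppedPath_le_iff {τ : PathSpace → ℝ}
    (hτ : ∀ t, MeasurableSet[natFilt t] {ω | τ ω ≤ t}) {ω : PathSpace} {u : ℝ} :
    τ (stoppedPath ω u) ≤ u ↔ τ ω ≤ u := by
  constructor
  · intro h
    have := galmarino hτ ((stoppedPath_idem ω u u).trans (by rw [min_self])) h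
    rw [this]; exact h
  · intro h
    rw [stopping_stoppedPath_eq hτ h]
    exact h

lemma stopping_lt_mem {σ π : PathSpace → ℝ}
    (hσ : ∀ t, MeasurableSet[natFilt t] {ω | σ ω ≤ t})
    (hπ : ∀ t, MeasurableSet[natFilt t] {ω | π ω ≤ t}) (t : ℝ) :
    MeasurableSet[natFilt t] {ω | σ ω < π ω ∧ π ω ≤ t} := by
  have hset : {ω : PathSpace | σ ω < π ω ∧ π ω ≤ t} =
      ⋃ q ∈ {q : ℚ | (q : ℝ) < t},
        ({ω | σ ω ≤ (q : ℝ)} ∩ {ω | π ω ≤ (q : ℝ)}ᶜ ∩ {ω | π ω ≤ t}) := by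
    ext ω
    simp only [Set.mem_setOf_eq, Set.mem_iUnion, Set.mem_inter_iff, Set.mem_compl_iff,
      exists_prop]
    constructor
    · rintro ⟨h1, h2⟩
      obtain ⟨q, hq1, hq2⟩ := exists_rat_btwn h1
      exact ⟨q, lt_of_lt_of_le hq2 h2, ⟨hq1.le, not_le.2 hq2⟩, h2⟩
    · rintro ⟨q, _, ⟨h1, h2⟩, h3⟩
      exact ⟨lt_of_le_of_lt h1 (not_le.1 h2), h3⟩
  rw [hset]
  refine MeasurableSet.biUnion (Set.to_countable _) fun q hq => ?_
  refine MeasurableSet.inter (MeasurableSet.inter ?_ ?_) (hπ t)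
  · exact natFilt_mono (le_of_lt hq) _ (hσ q)
  · exact (natFilt_mono (le_of_lt hq) _ (hπ q)).compl

lemma stopping_le_mem {σ π : PathSpace → ℝ}
    (hσ : ∀ t, MeasurableSet[natFilt t] {ω | σ ω ≤ t})
    (hπ : ∀ t, MeasurableSet[natFilt t] {ω | π ω ≤ t}) (t : ℝ) :
    MeasurableSet[natFilt t] {ω | σ ω ≤ π ω ∧ π ω ≤ t} := by
  have hset : {ω : PathSpace | σ ω ≤ π ω ∧ π ω ≤ t} =
      {ω | π ω ≤ t} \
        (({ω | π ω ≤ t} ∩ {ω | σ ω ≤ t}ᶜ) ∪ {ω | π ω < σ ω ∧ σ ω ≤ t}) := by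
    ext ω
    simp only [Set.mem_setOf_eq, Set.mem_diff, Set.mem_union, Set.mem_inter_iff,
      Set.mem_compl_iff]
    constructor
    · rintro ⟨h1, h2⟩
      refine ⟨h2, ?_⟩
      rintro (⟨-, h3⟩ | ⟨h3, -⟩)
      · exact h3 (h1.trans h2)
      · exact absurd h1 (not_le.2 h3)
    · rintro ⟨h2, h3⟩
      refine ⟨?_, h2⟩
      by_contra h4
      push_neg at h4
      rcases le_or_gt (σ ω) t with h5 | h5
      · exact h3 (Or.inr ⟨h4, h5⟩)
      · exact h3 (Or.inl ⟨h2, not_le.2 h5⟩)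
  rw [hset]
  exact (hπ t).diff (((hπ t).inter (hσ t).compl).union (stopping_lt_mem hπ hσ t))

end RF
namespace RF

lemma exists_tau_gt (H : SimpleStrategy) (ω : PathSpace) (x : ℝ) : ∃ n, x < H.τ n ω :=
  ((H.tau_tendsto ω).eventually_gt_atTop x).exists

/-- The index of the first stopping time of `H` strictly after level `x`. -/
def nxt (H : SimpleStrategy) (ω : PathSpace) (x : ℝ) : ℕ := Nat.find (exists_tau_gt H ω x)

lemma nxt_spec (H : SimpleStrategy) (ω : PathSpace) (x : ℝ) : x < H.τ (nxt H ω x) ω :=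
  Nat.find_spec (exists_tau_gt H ω x)

lemma nxt_min (H : SimpleStrategy) (ω : PathSpace) (x : ℝ) {j : ℕ} (hj : j < nxt H ω x) :
    H.τ j ω ≤ x := not_lt.1 (Nat.find_min _ hj)

lemma nxt_eq (H : SimpleStrategy) (ω : PathSpace) (x : ℝ) {n : ℕ} (h1 : x < H.τ n ω)
    (h2 : ∀ j < n, H.τ j ω ≤ x) : nxt H ω x = n :=
  (Nat.find_eq_iff _).2 ⟨h1, fun j hj => not_lt.2 (h2 j hj)⟩

lemma nxt_le (H : SimpleStrategy) (ω : PathSpace) (x : ℝ) {n : ℕ} (h : x < H.τ n ω) :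
    nxt H ω x ≤ n := Nat.find_le h

lemma nxt_pos (H : SimpleStrategy) (ω : PathSpace) (x : ℝ) (hx : 0 ≤ x) : 0 < nxt H ω x := by
  rcases Nat.eq_zero_or_pos (nxt H ω x) with h | h
  · have h2 := nxt_spec H ω x
    rw [h, H.tau_zero] at h2
    linarith
  · exact h

lemma tau_nxt_sub_one_le (H : SimpleStrategy) (ω : PathSpace) (x : ℝ) (hx : 0 ≤ x) :
    H.τ (nxt H ω x - 1) ω ≤ x :=
  nxt_min H ω x (Nat.sub_lt (nxt_pos H ω x hx) one_pos)

/-- The merged sequence of stopping times of two simple strategies. -/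
def mergeTau (H H' : SimpleStrategy) : ℕ → PathSpace → ℝ
  | 0, _ => 0
  | k + 1, ω =>
    min (H.τ (nxt H ω (mergeTau H H' k ω)) ω) (H'.τ (nxt H' ω (mergeTau H H' k ω)) ω)

lemma mergeTau_zero (H H' : SimpleStrategy) (ω : PathSpace) : mergeTau H H' 0 ω = 0 := rfl

lemma mergeTau_succ (H H' : SimpleStrategy) (k : ℕ) (ω : PathSpace) :
    mergeTau H H' (k + 1) ω =
      min (H.τ (nxt H ω (mergeTau H H' k ω)) ω) (H'.τ (nxt H' ω (mergeTau H H' k ω)) ω) := rfl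

lemma mergeTau_lt_succ (H H' : SimpleStrategy) (k : ℕ) (ω : PathSpace) :
    mergeTau H H' k ω < mergeTau H H' (k + 1) ω :=
  lt_min (nxt_spec H ω _) (nxt_spec H' ω _)

lemma mergeTau_strictMono (H H' : SimpleStrategy) (ω : PathSpace) :
    StrictMono fun k => mergeTau H H' k ω :=
  strictMono_nat_of_lt_succ fun k => mergeTau_lt_succ H H' k ω

lemma mergeTau_nonneg (H H' : SimpleStrategy) (k : ℕ) (ω : PathSpace) :
    0 ≤ mergeTau H H' k ω := by
  have := (mergeTau_strictMono H H' ω).monotone (Nat.zero_le k)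
  rwa [mergeTau_zero] at this

lemma mergeTau_index (H H' : SimpleStrategy) (k : ℕ) (ω : PathSpace) :
    ∃ m n, m + n = k ∧ H.τ m ω ≤ mergeTau H H' k ω ∧ H'.τ n ω ≤ mergeTau H H' k ω := by
  induction k with
  | zero =>
    refine ⟨0, 0, rfl, ?_, ?_⟩ <;>
      simp [H.tau_zero, H'.tau_zero, mergeTau_zero]
  | succ k ih =>
    obtain ⟨m, n, hmn, hm, hn⟩ := ih
    have hmlt : m < nxt H ω (mergeTau H H' k ω) := by
      by_contra hc
      push_neg at hc
      exact absurd ((tau_mono H ω hc).trans hm) (not_le.2 (nxt_spec H ω _))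
    have hnlt : n < nxt H' ω (mergeTau H H' k ω) := by
      by_contra hc
      push_neg at hc
      exact absurd ((tau_mono H' ω hc).trans hn) (not_le.2 (nxt_spec H' ω _))
    rcases le_total (H.τ (nxt H ω (mergeTau H H' k ω)) ω)
        (H'.τ (nxt H' ω (mergeTau H H' k ω)) ω) with hc | hc
    · refine ⟨m + 1, n, by omega, ?_, hn.trans (mergeTau_lt_succ H H' k ω).le⟩
      rw [mergeTau_succ, min_eq_left hc]
      exact tau_mono H ω hmlt
    · refine ⟨m, n + 1, by omega, hm.trans (mergeTau_lt_succ H H' k ω).le, ?_⟩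
      rw [mergeTau_succ, min_eq_right hc]
      exact tau_mono H' ω hnlt

lemma mergeTau_tendsto (H H' : SimpleStrategy) (ω : PathSpace) :
    Tendsto (fun k => mergeTau H H' k ω) atTop atTop := by
  rw [tendsto_atTop_atTop]
  intro b
  obtain ⟨N1, hN1⟩ := ((H.tau_tendsto ω).eventually_ge_atTop b).exists_forall_of_atTop
  obtain ⟨N2, hN2⟩ := ((H'.tau_tendsto ω).eventually_ge_atTop b).exists_forall_of_atTop
  refine ⟨N1 + N2, fun k hk => ?_⟩
  obtain ⟨m, n, hmn, hm, hn⟩ := mergeTau_index H H' k ω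
  rcases (show N1 ≤ m ∨ N2 ≤ n by omega) with h | h
  · exact le_trans (hN1 m h) hm
  · exact le_trans (hN2 n h) hn

lemma mergeTau_stopping (H H' : SimpleStrategy) (k : ℕ) :
    ∀ t, MeasurableSet[natFilt t] {ω | mergeTau H H' k ω ≤ t} := by
  induction k with
  | zero =>
    intro t
    simp only [mergeTau_zero]
    exact MeasurableSet.const _
  | succ k ih =>
    intro t
    have hA : ∀ (G : SimpleStrategy) (n : ℕ), MeasurableSet[natFilt t]
        ({ω | mergeTau H H' k ω < G.τ n ω ∧ G.τ n ω ≤ t} ∩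
          ⋂ j ∈ Finset.range n,
            {ω | G.τ j ω ≤ mergeTau H H' k ω ∧ mergeTau H H' k ω ≤ t}) := by
      intro G n
      exact (stopping_lt_mem ih (G.tau_stopping n) t).inter
        (MeasurableSet.biInter (Finset.range n).countable_toSet
          (fun j _ => stopping_le_mem (G.tau_stopping j) ih t))
    have hset : {ω | mergeTau H H' (k+1) ω ≤ t} =
        (⋃ n, ({ω | mergeTau H H' k ω < H.τ n ω ∧ H.τ n ω ≤ t} ∩
          ⋂ j ∈ Finset.range n,
            {ω | H.τ j ω ≤ mergeTau H H' k ω ∧ mergeTau H H' k ω ≤ t})) ∪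
        (⋃ n, ({ω | mergeTau H H' k ω < H'.τ n ω ∧ H'.τ n ω ≤ t} ∩
          ⋂ j ∈ Finset.range n,
            {ω | H'.τ j ω ≤ mergeTau H H' k ω ∧ mergeTau H H' k ω ≤ t})) := by
      ext ω
      simp only [Set.mem_setOf_eq, Set.mem_union, Set.mem_iUnion, Set.mem_inter_iff,
        Set.mem_iInter, Finset.mem_range]
      constructor
      · intro h
        rw [mergeTau_succ] at h
        rcases min_le_iff.1 h with h1 | h1
        · exact Or.inl ⟨nxt H ω _, ⟨nxt_spec H ω _, h1⟩,
            fun j hj => ⟨nxt_min H ω _ hj, ((nxt_spec H ω _).trans_le h1).le⟩⟩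
        · exact Or.inr ⟨nxt H' ω _, ⟨nxt_spec H' ω _, h1⟩,
            fun j hj => ⟨nxt_min H' ω _ hj, ((nxt_spec H' ω _).trans_le h1).le⟩⟩
      · rintro (⟨n, ⟨h1, h2⟩, h3⟩ | ⟨n, ⟨h1, h2⟩, h3⟩)
        · have hnx : nxt H ω (mergeTau H H' k ω) = n :=
            nxt_eq H ω _ h1 (fun j hj => (h3 j hj).1)
          rw [mergeTau_succ, hnx]
          exact le_trans (min_le_left _ _) h2
        · have hnx : nxt H' ω (mergeTau H H' k ω) = n :=
            nxt_eq H' ω _ h1 (fun j hj => (h3 j hj).1)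
          rw [mergeTau_succ, hnx]
          exact le_trans (min_le_right _ _) h2
    rw [hset]
    exact (MeasurableSet.iUnion fun n => hA H n).union (MeasurableSet.iUnion fun n => hA H' n)

lemma nxt_mergeTau_le (H H' : SimpleStrategy) (ω : PathSpace) :
    ∀ k, nxt H ω (mergeTau H H' k ω) ≤ k + 1 ∧ nxt H' ω (mergeTau H H' k ω) ≤ k + 1 := by
  intro k
  induction k with
  | zero =>
    constructor
    · apply nxt_le
      rw [mergeTau_zero, ← H.tau_zero ω]
      exact H.tau_lt 0 ω
    · apply nxt_le
      rw [mergeTau_zero, ← H'.tau_zero ω]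
      exact H'.tau_lt 0 ω
  | succ k ih =>
    constructor
    · refine le_trans (nxt_le H ω _ (lt_of_le_of_lt (min_le_left _ _) (H.tau_lt _ ω))) ?_
      omega
    · refine le_trans (nxt_le H' ω _ (lt_of_le_of_lt (min_le_right _ _) (H'.tau_lt _ ω))) ?_
      omega

lemma F_bdd_unif (H : SimpleStrategy) (k : ℕ) :
    ∃ C, ∀ (ω : PathSpace), ∀ j ≤ k, |H.F j ω| ≤ C := by
  refine ⟨∑ n ∈ Finset.range (k+1), max ((H.F_bdd n).choose) 0, fun ω j hj => ?_⟩
  calc |H.F j ω| ≤ (H.F_bdd j).choose := (H.F_bdd j).choose_spec ω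
    _ ≤ max ((H.F_bdd j).choose) 0 := le_max_left _ _
    _ ≤ ∑ n ∈ Finset.range (k+1), max ((H.F_bdd n).choose) 0 :=
        Finset.single_le_sum (f := fun n => max ((H.F_bdd n).choose) 0) (fun i _ => le_max_right _ _)
          (Finset.mem_range.2 (Nat.lt_succ_of_le hj))

end RF
namespace RF

lemma nxt_stoppedPath (H : SimpleStrategy) (ω : PathSpace) (u : ℝ) :
    nxt H (stoppedPath ω u) u = nxt H ω u := by
  apply nxt_eq
  · by_contra h
    push_neg at h
    exact absurd ((stopping_stoppedPath_le_iff (H.tau_stopping _)).1 h)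
      (not_le.2 (nxt_spec H ω u))
  · intro j hj
    have hju : H.τ j ω ≤ u := nxt_min H ω u hj
    rw [stopping_stoppedPath_eq (H.tau_stopping j) hju]
    exact hju

/-- The trace σ-algebra used in the proof of `mergeF_meas`. -/
def traceAlg (M : MeasurableSpace PathSpace) (E : Set PathSpace) (hE : MeasurableSet[M] E) :
    MeasurableSpace PathSpace where
  MeasurableSet' B := MeasurableSet[M] (E ∩ B)
  measurableSet_empty := by simpa using (@MeasurableSet.empty _ M)
  measurableSet_compl B hB := by
    have hrw : E ∩ Bᶜ = E \ (E ∩ B) := by rw [Set.diff_self_inter, Set.diff_eq]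
    show MeasurableSet[M] (E ∩ Bᶜ)
    rw [hrw]
    exact hE.diff hB
  measurableSet_iUnion f hf := by
    show MeasurableSet[M] (E ∩ ⋃ i, f i)
    rw [Set.inter_iUnion]
    exact MeasurableSet.iUnion hf

lemma traceAlg_mem {M : MeasurableSpace PathSpace} {E : Set PathSpace}
    {hE : MeasurableSet[M] E} {B : Set PathSpace}
    (h : MeasurableSet[traceAlg M E hE] B) : MeasurableSet[M] (E ∩ B) := h

/-- The positions of the sum of two simple strategies. -/
def mergeF (H H' : SimpleStrategy) (k : ℕ) (ω : PathSpace) : ℝ :=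
  H.F (nxt H ω (mergeTau H H' k ω) - 1) ω + H'.F (nxt H' ω (mergeTau H H' k ω) - 1) ω

lemma mergeF_meas (H H' : SimpleStrategy) (k : ℕ) :
    @Measurable _ _
      (MeasurableSpace.comap (fun ω => stoppedPath ω (mergeTau H H' k ω)) inferInstance) _
      (mergeF H H' k) := by
  have hρstop : ∀ t, MeasurableSet[natFilt t] {ω | mergeTau H H' k ω ≤ t} :=
    mergeTau_stopping H H' k
  have hρmeas : Measurable (mergeTau H H' k) := stopping_measurable hρstop
  have hρnonneg : ∀ ω, 0 ≤ mergeTau H H' k ω := mergeTau_nonneg H H' k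
  have hnxtset : ∀ (G : SimpleStrategy) (n : ℕ),
      MeasurableSet {p : PathSpace | nxt G p (mergeTau H H' k p) = n} := by
    intro G n
    have hset : {p : PathSpace | nxt G p (mergeTau H H' k p) = n} =
        {p | mergeTau H H' k p < G.τ n p} ∩
          ⋂ j ∈ Finset.range n, {p | G.τ j p ≤ mergeTau H H' k p} := by
      ext p
      simp only [Set.mem_setOf_eq, Set.mem_inter_iff, Set.mem_iInter, Finset.mem_range]
      constructor
      · intro h
        exact ⟨h ▸ nxt_spec G p _, fun j hj => nxt_min G p _ (h ▸ hj)⟩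
      · rintro ⟨h1, h2⟩
        exact nxt_eq G p _ h1 h2
    rw [hset]
    exact (measurableSet_lt hρmeas (stopping_measurable (G.tau_stopping n))).inter
      (MeasurableSet.biInter (Finset.range n).countable_toSet
        (fun j _ => measurableSet_le (stopping_measurable (G.tau_stopping j)) hρmeas))
  have hρp : ∀ ω, mergeTau H H' k (stoppedPath ω (mergeTau H H' k ω)) = mergeTau H H' k ω :=
    fun ω => stopping_stoppedPath_eq hρstop le_rfl
  have hnxtp : ∀ (G : SimpleStrategy) (ω : PathSpace),
      nxt G (stoppedPath ω (mergeTau H H' k ω))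
          (mergeTau H H' k (stoppedPath ω (mergeTau H H' k ω))) =
        nxt G ω (mergeTau H H' k ω) := by
    intro G ω
    rw [hρp ω]
    exact nxt_stoppedPath G ω _
  -- key piece lemma
  have key : ∀ (G : SimpleStrategy) (i n m : ℕ),
      (∀ ω : PathSpace, nxt H ω (mergeTau H H' k ω) = n →
        nxt H' ω (mergeTau H H' k ω) = m → G.τ i ω ≤ mergeTau H H' k ω) →
      ∀ T : Set PathSpace, MeasurableSet T →
      MeasurableSet[MeasurableSpace.comap
          (fun ω => stoppedPath ω (mergeTau H H' k ω)) inferInstance]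
        ({ω | nxt H ω (mergeTau H H' k ω) = n ∧ nxt H' ω (mergeTau H H' k ω) = m} ∩
          {ω | stoppedPath ω (G.τ i ω) ∈ T}) := by
    intro G i n m himp T hT
    have hT'meas : MeasurableSet {p : PathSpace | nxt H p (mergeTau H H' k p) = n ∧
        nxt H' p (mergeTau H H' k p) = m ∧ stoppedPath p (G.τ i p) ∈ T} := by
      have h3 : MeasurableSet {p : PathSpace | stoppedPath p (G.τ i p) ∈ T} :=
        measurable_stoppedPath_comp (stopping_measurable (G.tau_stopping i)) hT
      have hrw : {p : PathSpace | nxt H p (mergeTau H H' k p) = n ∧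
          nxt H' p (mergeTau H H' k p) = m ∧ stoppedPath p (G.τ i p) ∈ T} =
          {p : PathSpace | nxt H p (mergeTau H H' k p) = n} ∩
            ({p : PathSpace | nxt H' p (mergeTau H H' k p) = m} ∩
              {p : PathSpace | stoppedPath p (G.τ i p) ∈ T}) := by
        rfl
      rw [hrw]
      exact (hnxtset H n).inter ((hnxtset H' m).inter h3)
    refine MeasurableSpace.measurableSet_comap.2
      ⟨{p : PathSpace | nxt H p (mergeTau H H' k p) = n ∧
        nxt H' p (mergeTau H H' k p) = m ∧ stoppedPath p (G.τ i p) ∈ T}, hT'meas, ?_⟩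
    ext ω
    simp only [Set.mem_preimage]
    have h1 := hnxtp H ω
    have h2 := hnxtp H' ω
    simp only [Set.mem_setOf_eq, Set.mem_inter_iff, h1, h2]
    constructor
    · rintro ⟨hc1, hc2, hc3⟩
      refine ⟨⟨hc1, hc2⟩, ?_⟩
      have hτ : G.τ i ω ≤ mergeTau H H' k ω := himp ω hc1 hc2
      have hτp : G.τ i (stoppedPath ω (mergeTau H H' k ω)) = G.τ i ω :=
        stopping_stoppedPath_eq (G.tau_stopping i) hτ
      rw [hτp, stoppedPath_idem, min_eq_left hτ] at hc3
      exact hc3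
    · rintro ⟨⟨hc1, hc2⟩, hc3⟩
      refine ⟨hc1, hc2, ?_⟩
      have hτ : G.τ i ω ≤ mergeTau H H' k ω := himp ω hc1 hc2
      have hτp : G.τ i (stoppedPath ω (mergeTau H H' k ω)) = G.τ i ω :=
        stopping_stoppedPath_eq (G.tau_stopping i) hτ
      rw [hτp, stoppedPath_idem, min_eq_left hτ]
      exact hc3
  have hE : ∀ n m : ℕ,
      MeasurableSet[MeasurableSpace.comap
          (fun ω => stoppedPath ω (mergeTau H H' k ω)) inferInstance]
        {ω | nxt H ω (mergeTau H H' k ω) = n ∧ nxt H' ω (mergeTau H H' k ω) = m} := by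
    intro n m
    have h := key H 0 n m (fun ω _ _ => by
      rw [H.tau_zero]
      exact hρnonneg ω) Set.univ MeasurableSet.univ
    simpa using h
  intro S hS
  have hpiece : ∀ n m : ℕ,
      MeasurableSet[MeasurableSpace.comap
          (fun ω => stoppedPath ω (mergeTau H H' k ω)) inferInstance]
        ({ω | nxt H ω (mergeTau H H' k ω) = n + 1 ∧ nxt H' ω (mergeTau H H' k ω) = m + 1} ∩
          {ω | H.F n ω + H'.F m ω ∈ S}) := by
    intro n m
    have hle1 : MeasurableSpace.comap (fun ω => stoppedPath ω (H.τ n ω))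
        (inferInstance : MeasurableSpace PathSpace) ≤
        traceAlg _ _ (hE (n+1) (m+1)) := by
      intro B hB
      obtain ⟨T, hT, rfl⟩ := hB
      exact key H n (n+1) (m+1)
        (fun ω hc1 _ => nxt_min H ω _ (by omega)) T hT
    have hle2 : MeasurableSpace.comap (fun ω => stoppedPath ω (H'.τ m ω))
        (inferInstance : MeasurableSpace PathSpace) ≤
        traceAlg _ _ (hE (n+1) (m+1)) := by
      intro B hB
      obtain ⟨T, hT, rfl⟩ := hB
      exact key H' m (n+1) (m+1)
        (fun ω _ hc2 => nxt_min H' ω _ (by omega)) T hT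
    have hFn : Measurable[traceAlg _ _ (hE (n+1) (m+1))] (H.F n) :=
      (H.F_meas n).mono hle1 le_rfl
    have hF'm : Measurable[traceAlg _ _ (hE (n+1) (m+1))] (H'.F m) :=
      (H'.F_meas m).mono hle2 le_rfl
    exact traceAlg_mem ((hFn.add hF'm) hS)
  have hdecomp : (mergeF H H' k) ⁻¹' S =
      ⋃ n, ⋃ m, ({ω | nxt H ω (mergeTau H H' k ω) = n + 1 ∧
          nxt H' ω (mergeTau H H' k ω) = m + 1} ∩
        {ω | H.F n ω + H'.F m ω ∈ S}) := by
    ext ω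
    simp only [Set.mem_preimage, Set.mem_iUnion, Set.mem_inter_iff, Set.mem_setOf_eq]
    constructor
    · intro h
      have h1 : 0 < nxt H ω (mergeTau H H' k ω) := nxt_pos H ω _ (hρnonneg ω)
      have h2 : 0 < nxt H' ω (mergeTau H H' k ω) := nxt_pos H' ω _ (hρnonneg ω)
      exact ⟨nxt H ω (mergeTau H H' k ω) - 1, nxt H' ω (mergeTau H H' k ω) - 1,
        ⟨by omega, by omega⟩, h⟩
    · rintro ⟨n, m, ⟨hc1, hc2⟩, h⟩
      show mergeF H H' k ω ∈ S
      unfold mergeF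
      rw [hc1, hc2]
      simpa using h
  rw [hdecomp]
  exact MeasurableSet.iUnion fun n => MeasurableSet.iUnion fun m => hpiece n m

/-- The sum of two simple strategies: trade both strategies simultaneously, along the
merged sequence of stopping times. -/
def addStrat (H H' : SimpleStrategy) : SimpleStrategy where
  τ := mergeTau H H'
  F := mergeF H H'
  tau_zero _ := rfl
  tau_lt := fun k ω => mergeTau_lt_succ H H' k ω
  tau_tendsto := mergeTau_tendsto H H'
  tau_stopping := fun k t => mergeTau_stopping H H' k t
  F_meas := mergeF_meas H H'
  F_bdd := fun k => by
    obtain ⟨C1, h1⟩ := F_bdd_unif H (k + 1)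
    obtain ⟨C2, h2⟩ := F_bdd_unif H' (k + 1)
    refine ⟨C1 + C2, fun ω => ?_⟩
    refine (abs_add_le _ _).trans (add_le_add (h1 ω _ ?_) (h2 ω _ ?_))
    · have := (nxt_mergeTau_le H H' ω k).1
      omega
    · have := (nxt_mergeTau_le H H' ω k).2
      omega

end RF
namespace RF

lemma capital_term_zero (H : SimpleStrategy) (t : ℝ) (ω : PathSpace) {n : ℕ}
    (h : t ≤ H.τ n ω) :
    H.F n ω * (ω.1 (min (H.τ (n + 1) ω) t) - ω.1 (min (H.τ n ω) t)) = 0 := by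
  rw [min_eq_right h, min_eq_right (h.trans (tau_mono H ω (Nat.le_succ n)))]
  ring

lemma capital_eq_sum (H : SimpleStrategy) (t : ℝ) (ω : PathSpace) {K : ℕ}
    (hK : t ≤ H.τ K ω) :
    capital H t ω = ∑ n ∈ Finset.range K,
      H.F n ω * (ω.1 (min (H.τ (n + 1) ω) t) - ω.1 (min (H.τ n ω) t)) := by
  apply tsum_eq_sum
  intro n hn
  have hKn : K ≤ n := by
    by_contra hc
    exact hn (Finset.mem_range.2 (not_le.1 hc))
  exact capital_term_zero H t ω (hK.trans (tau_mono H ω hKn))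

lemma merge_component (H H' G : SimpleStrategy) (ω : PathSpace) (t : ℝ)
    (hGle : ∀ k, mergeTau H H' (k + 1) ω ≤ G.τ (nxt G ω (mergeTau H H' k ω)) ω) :
    (∑' k, G.F (nxt G ω (mergeTau H H' k ω) - 1) ω *
      (ω.1 (min (mergeTau H H' (k + 1) ω) t) - ω.1 (min (mergeTau H H' k ω) t)))
      = capital G t ω := by
  set ρ : ℕ → ℝ := fun k => mergeTau H H' k ω with hρdef
  set c : ℕ → ℕ := fun k => nxt G ω (ρ k) - 1 with hcdef
  set g : ℝ → ℝ := fun x => ω.1 (min x t) with hgdef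
  have hρ0 : ρ 0 = 0 := rfl
  have hρmono : StrictMono ρ := mergeTau_strictMono H H' ω
  have hρnn : ∀ k, 0 ≤ ρ k := fun k => mergeTau_nonneg H H' k ω
  have hcnxt : ∀ k, c k + 1 = nxt G ω (ρ k) := by
    intro k
    have := nxt_pos G ω (ρ k) (hρnn k)
    simp only [hcdef]
    omega
  have hc1 : ∀ k, G.τ (c k) ω ≤ ρ k := fun k => tau_nxt_sub_one_le G ω (ρ k) (hρnn k)
  have hc2 : ∀ k, ρ k < G.τ (c k + 1) ω := fun k => (hcnxt k) ▸ nxt_spec G ω (ρ k)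
  have hc0 : c 0 = 0 := by
    have h1 : nxt G ω 0 = 1 := by
      apply nxt_eq
      · rw [← G.tau_zero ω]
        exact G.tau_lt 0 ω
      · intro j hj
        interval_cases j
        rw [G.tau_zero]
    simp only [hcdef, hρ0, h1]
  have hstep : ∀ k, c (k + 1) = c k ∨
      (c (k + 1) = c k + 1 ∧ G.τ (c k + 1) ω = ρ (k + 1)) := by
    intro k
    have hle : ρ (k + 1) ≤ G.τ (c k + 1) ω := (hcnxt k) ▸ hGle k
    rcases lt_or_eq_of_le hle with hlt | heq
    · left
      have hnx : nxt G ω (ρ (k + 1)) = c k + 1 := by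
        apply nxt_eq
        · exact hlt
        · intro j hj
          have hj' : j ≤ c k := by omega
          calc G.τ j ω ≤ G.τ (c k) ω := tau_mono G ω hj'
            _ ≤ ρ k := hc1 k
            _ ≤ ρ (k + 1) := (hρmono (Nat.lt_succ_self k)).le
      have := hcnxt (k + 1)
      omega
    · right
      have hnx : nxt G ω (ρ (k + 1)) = c k + 2 := by
        apply nxt_eq
        · rw [heq]
          exact G.tau_lt (c k + 1) ω
        · intro j hj
          have hj' : j ≤ c k + 1 := by omega
          rw [heq]
          exact tau_mono G ω hj'
      have := hcnxt (k + 1)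
      constructor
      · omega
      · exact heq.symm
  have hP : ∀ K, ∑ k ∈ Finset.range K,
        G.F (c k) ω * (g (ρ (k + 1)) - g (ρ k)) =
      (∑ n ∈ Finset.range (c K), G.F n ω * (g (G.τ (n + 1) ω) - g (G.τ n ω))) +
        G.F (c K) ω * (g (ρ K) - g (G.τ (c K) ω)) := by
    intro K
    induction K with
    | zero =>
      rw [hc0]
      simp [hρ0, G.tau_zero ω]
    | succ K ih =>
      rw [Finset.sum_range_succ, ih]
      rcases hstep K with heq | ⟨heq, hτρ⟩
      · rw [heq]
        ring
      · rw [heq, Finset.sum_range_succ, hτρ]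
        ring
  obtain ⟨N, hN⟩ := exists_tau_gt G ω t
  obtain ⟨K, hK⟩ := ((mergeTau_tendsto H H' ω).eventually_ge_atTop
    (max t (G.τ N ω))).exists
  have hρKt : t ≤ ρ K := le_trans (le_max_left _ _) hK
  have hτNρ : G.τ N ω ≤ ρ K := le_trans (le_max_right _ _) hK
  have hNcK : N ≤ c K := by
    have h1 : G.τ N ω < G.τ (c K + 1) ω := lt_of_le_of_lt hτNρ (hc2 K)
    have h2 : N < c K + 1 := (tau_strictMono G ω).lt_iff_lt.1 h1
    omega
  have htcK : t ≤ G.τ (c K) ω := le_trans hN.le (tau_mono G ω hNcK)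
  have hLHS : (∑' k, G.F (nxt G ω (mergeTau H H' k ω) - 1) ω *
      (ω.1 (min (mergeTau H H' (k + 1) ω) t) - ω.1 (min (mergeTau H H' k ω) t))) =
      ∑ k ∈ Finset.range K, G.F (c k) ω * (g (ρ (k + 1)) - g (ρ k)) := by
    apply tsum_eq_sum
    intro k hk
    have hKk : K ≤ k := by
      by_contra hc
      exact hk (Finset.mem_range.2 (not_le.1 hc))
    have ht1 : t ≤ ρ k := hρKt.trans (hρmono.monotone hKk)
    have ht2 : t ≤ ρ (k + 1) := ht1.trans (hρmono (Nat.lt_succ_self k)).le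
    show G.F (c k) ω * (g (ρ (k + 1)) - g (ρ k)) = 0
    simp only [hgdef]
    rw [min_eq_right ht2, min_eq_right ht1]
    ring
  rw [hLHS, hP K, capital_eq_sum G t ω htcK]
  have hrem : g (ρ K) - g (G.τ (c K) ω) = 0 := by
    simp only [hgdef]
    rw [min_eq_right hρKt, min_eq_right htcK]
    ring
  rw [hrem]
  ring

lemma capital_addStrat (H H' : SimpleStrategy) (t : ℝ) (ω : PathSpace) :
    capital (addStrat H H') t ω = capital H t ω + capital H' t ω := by
  obtain ⟨K, hK⟩ := ((mergeTau_tendsto H H' ω).eventually_ge_atTop t).exists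
  have hsummand : ∀ (G : SimpleStrategy), ∀ k, K ≤ k →
      G.F (nxt G ω (mergeTau H H' k ω) - 1) ω *
        (ω.1 (min (mergeTau H H' (k + 1) ω) t) - ω.1 (min (mergeTau H H' k ω) t)) = 0 := by
    intro G k hk
    have ht1 : t ≤ mergeTau H H' k ω :=
      hK.trans ((mergeTau_strictMono H H' ω).monotone hk)
    have ht2 : t ≤ mergeTau H H' (k + 1) ω :=
      ht1.trans (mergeTau_lt_succ H H' k ω).le
    rw [min_eq_right ht2, min_eq_right ht1]
    ring
  have hs1 : Summable (fun k => H.F (nxt H ω (mergeTau H H' k ω) - 1) ω *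
      (ω.1 (min (mergeTau H H' (k + 1) ω) t) - ω.1 (min (mergeTau H H' k ω) t))) := by
    apply summable_of_ne_finset_zero (s := Finset.range K)
    intro k hk
    exact hsummand H k (by by_contra hc; exact hk (Finset.mem_range.2 (not_le.1 hc)))
  have hs2 : Summable (fun k => H'.F (nxt H' ω (mergeTau H H' k ω) - 1) ω *
      (ω.1 (min (mergeTau H H' (k + 1) ω) t) - ω.1 (min (mergeTau H H' k ω) t))) := by
    apply summable_of_ne_finset_zero (s := Finset.range K)
    intro k hk
    exact hsummand H' k (by by_contra hc; exact hk (Finset.mem_range.2 (not_le.1 hc)))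
  have hcap : capital (addStrat H H') t ω =
      (∑' k, H.F (nxt H ω (mergeTau H H' k ω) - 1) ω *
        (ω.1 (min (mergeTau H H' (k + 1) ω) t) - ω.1 (min (mergeTau H H' k ω) t))) +
      (∑' k, H'.F (nxt H' ω (mergeTau H H' k ω) - 1) ω *
        (ω.1 (min (mergeTau H H' (k + 1) ω) t) - ω.1 (min (mergeTau H H' k ω) t))) := by
    rw [← Summable.tsum_add hs1 hs2]
    apply tsum_congr
    intro k
    show mergeF H H' k ω *
        (ω.1 (min (mergeTau H H' (k + 1) ω) t) - ω.1 (min (mergeTau H H' k ω) t)) = _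
    unfold mergeF
    ring
  rw [hcap, merge_component H H' H ω t (fun k => min_le_left _ _),
    merge_component H H' H' ω t (fun k => min_le_right _ _)]

/-- Iterated sums of simple strategies. -/
def foldStrat (Hs : ℕ → SimpleStrategy) : ℕ → SimpleStrategy
  | 0 => Hs 0
  | k + 1 => addStrat (foldStrat Hs k) (Hs (k + 1))

lemma capital_foldStrat (Hs : ℕ → SimpleStrategy) (k : ℕ) (t : ℝ) (ω : PathSpace) :
    capital (foldStrat Hs k) t ω = ∑ n ∈ Finset.range (k + 1), capital (Hs n) t ω := by
  induction k with
  | zero => simp [foldStrat]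
  | succ k ih =>
    rw [show foldStrat Hs (k + 1) = addStrat (foldStrat Hs k) (Hs (k + 1)) from rfl,
      capital_addStrat, ih]
    exact (Finset.sum_range_succ _ (k + 1)).symm

/-- The trivial strategy which never holds a position. -/
def zeroStrategy : SimpleStrategy where
  τ := fun n _ => n
  F := fun _ _ => 0
  tau_zero _ := by norm_num
  tau_lt n ω := by
    show (n : ℝ) < ((n + 1 : ℕ) : ℝ)
    exact_mod_cast Nat.lt_succ_self n
  tau_tendsto _ := tendsto_natCast_atTop_atTop
  tau_stopping n t := MeasurableSet.const _
  F_meas n := measurable_const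
  F_bdd n := ⟨0, fun ω => by simp⟩

lemma capital_zeroStrategy (t : ℝ) (ω : PathSpace) : capital zeroStrategy t ω = 0 := by
  simp [capital, zeroStrategy]

end RF
namespace RF

/-- The constant zero path. -/
def zeroPath : PathSpace := ⟨fun _ => 0, continuous_const, fun _ _ => rfl⟩

lemma zeroPath_mem : zeroPath ∈ OmegaQV := by
  refine ⟨fun _ => 0, continuous_const, ?_, ?_, Or.inl ⟨0, tendsto_const_nhds⟩⟩
  · have hq : (fun n => discreteQV zeroPath.1 n) = fun (_ : ℕ) (_ : ℝ) => (0 : ℝ) := by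
      funext n t
      simp [discreteQV, zeroPath]
    rw [hq]
    apply TendstoUniformly.tendstoLocallyUniformly
    intro u hu
    filter_upwards with n x
    exact refl_mem_uniformity hu
  · exact fun u v _ _ => Iff.rfl

lemma capital_zeroPath (H : SimpleStrategy) (t : ℝ) : capital H t zeroPath = 0 := by
  simp [capital, zeroPath]

lemma Pbar_le (A : Set PathSpace) {lam : ℝ} (hlam : 0 < lam) (Hs : ℕ → SimpleStrategy)
    (hadm : ∀ n (ω : PathSpace) (t : ℝ), ω ∈ OmegaQV → 0 ≤ t → -lam ≤ capital (Hs n) t ω)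
    (hsup : ∀ ω ∈ OmegaQV, (A.indicator (fun _ => (1 : EReal)) ω) ≤
      liminf (fun t : ℝ => liminf (fun n : ℕ =>
        ((lam + capital (Hs n) t ω : ℝ) : EReal)) atTop) atTop) :
    Pbar A ≤ ENNReal.ofReal lam := by
  unfold Pbar Ebar
  exact sInf_le ⟨lam, hlam, rfl, Hs, hadm, hsup⟩

lemma liminf_zeroStrategy (lam : ℝ) (ω : PathSpace) :
    liminf (fun t : ℝ => liminf (fun n : ℕ =>
      ((lam + capital zeroStrategy t ω : ℝ) : EReal)) atTop) atTop = (lam : EReal) := by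
  have h1 : ∀ t : ℝ, (fun n : ℕ => ((lam + capital zeroStrategy t ω : ℝ) : EReal)) =
      fun _ => (lam : EReal) := by
    intro t
    funext n
    rw [capital_zeroStrategy, add_zero]
  simp only [h1, liminf_const]

end RF
namespace RF

/-- **`P̄` is an outer measure with total mass one**: it is nondecreasing, countably
subadditive, vanishes on the empty set, and assigns mass one to `Ω^qv`. -/
theorem Pbar_isOuterMeasure :
    (∀ A A' : Set PathSpace, A ⊆ OmegaQV → A' ⊆ OmegaQV → A ⊆ A' → Pbar A ≤ Pbar A') ∧
    (∀ A : ℕ → Set PathSpace, (∀ n, A n ⊆ OmegaQV) →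
      Pbar (⋃ n, A n) ≤ ∑' n, Pbar (A n)) ∧
    Pbar (∅ : Set PathSpace) = 0 ∧
    Pbar OmegaQV = 1 := by
  have hmono : ∀ A A' : Set PathSpace, A ⊆ A' → Pbar A ≤ Pbar A' := by
    intro A A' hAA
    unfold Pbar Ebar
    apply sInf_le_sInf
    rintro l ⟨lam, hlam, rfl, Hs, hadm, hsup⟩
    refine ⟨lam, hlam, rfl, Hs, hadm, fun ω hω => le_trans ?_ (hsup ω hω)⟩
    exact Set.indicator_le_indicator_of_subset hAA (fun _ => by norm_num) ω
  have hempty : Pbar (∅ : Set PathSpace) = 0 := by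
    refine le_antisymm ?_ zero_le
    refine ENNReal.le_of_forall_pos_le_add fun η hη _ => ?_
    rw [zero_add]
    have h := Pbar_le ∅ (show (0 : ℝ) < (η : ℝ) from hη) (fun _ => zeroStrategy)
      (fun n ω t _ _ => by
        rw [capital_zeroStrategy]
        exact neg_nonpos.2 η.coe_nonneg)
      (fun ω hω => by
        rw [liminf_zeroStrategy, Set.indicator_empty]
        show (0 : EReal) ≤ (((η : ℝ)) : EReal)
        exact EReal.coe_nonneg.2 η.coe_nonneg)
    calc Pbar ∅ ≤ ENNReal.ofReal (η : ℝ) := h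
      _ = (η : ℝ≥0∞) := ENNReal.ofReal_coe_nnreal
  have hmass : Pbar OmegaQV = 1 := by
    refine le_antisymm ?_ ?_
    · have h := Pbar_le OmegaQV one_pos (fun _ => zeroStrategy)
        (fun n ω t _ _ => by
          rw [capital_zeroStrategy]
          linarith)
        (fun ω hω => by
          rw [liminf_zeroStrategy, Set.indicator_of_mem hω, EReal.coe_one])
      simpa using h
    · unfold Pbar Ebar
      refine le_sInf ?_
      rintro l ⟨lam, hlam, rfl, Hs, hadm, hsup⟩
      have h := hsup zeroPath zeroPath_mem
      rw [Set.indicator_of_mem zeroPath_mem] at h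
      have h2 : liminf (fun t : ℝ => liminf (fun n : ℕ =>
          ((lam + capital (Hs n) t zeroPath : ℝ) : EReal)) atTop) atTop = (lam : EReal) := by
        have h1 : ∀ t : ℝ, (fun n : ℕ => ((lam + capital (Hs n) t zeroPath : ℝ) : EReal)) =
            fun _ => (lam : EReal) := by
          intro t
          funext n
          rw [capital_zeroPath, add_zero]
        simp only [h1, liminf_const]
      rw [h2, show (1 : EReal) = ((1:ℝ) : EReal) from EReal.coe_one.symm,
        EReal.coe_le_coe_iff] at h
      calc (1 : ℝ≥0∞) = ENNReal.ofReal 1 := ENNReal.ofReal_one.symm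
        _ ≤ ENNReal.ofReal lam := ENNReal.ofReal_le_ofReal h
  have hsub : ∀ A : ℕ → Set PathSpace, Pbar (⋃ n, A n) ≤ ∑' n, Pbar (A n) := by
    intro A
    by_cases htop : ∑' n, Pbar (A n) = ⊤
    · rw [htop]
      exact le_top
    refine ENNReal.le_of_forall_pos_le_add fun η hη hlt => ?_
    set ε : ℝ := (η : ℝ) / 2 with hεdef
    have hε : 0 < ε := by positivity
    have hex : ∀ n : ℕ, ∃ lam : ℝ, 0 < lam ∧
        ENNReal.ofReal lam < Pbar (A n) + ENNReal.ofReal (ε / 2 / 2 ^ n) ∧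
        ∃ Hs : ℕ → SimpleStrategy,
          (∀ k (ω : PathSpace) (t : ℝ), ω ∈ OmegaQV → 0 ≤ t → -lam ≤ capital (Hs k) t ω) ∧
          ∀ ω ∈ OmegaQV, ((A n).indicator (fun _ => (1 : EReal)) ω) ≤
            liminf (fun t : ℝ => liminf (fun k : ℕ =>
              ((lam + capital (Hs k) t ω : ℝ) : EReal)) atTop) atTop := by
      intro n
      have hfin : Pbar (A n) ≠ ⊤ := ne_top_of_le_ne_top htop (ENNReal.le_tsum n)
      have hlt2 : Pbar (A n) < Pbar (A n) + ENNReal.ofReal (ε / 2 / 2 ^ n) :=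
        ENNReal.lt_add_right hfin (ENNReal.ofReal_pos.2 (by positivity)).ne'
      rw [show Pbar (A n) = Ebar ((A n).indicator fun _ => (1:EReal)) from rfl] at hlt2
      unfold Ebar at hlt2
      obtain ⟨l, hl, hllt⟩ := sInf_lt_iff.1 hlt2
      obtain ⟨lam, hlam, rfl, Hs, hadm, hsup⟩ := hl
      exact ⟨lam, hlam, hllt, Hs, hadm, hsup⟩
    choose lams hpos hlt Hss hadm hsup using hex
    have h2geo : ∑' n, ENNReal.ofReal (ε / 2 / 2 ^ n) = ENNReal.ofReal ε := by
      rw [← ENNReal.ofReal_tsum_of_nonneg (fun n => by positivity) (summable_geometric_two' ε),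
        tsum_geometric_two' ε]
    have hofsum : ∑' n, ENNReal.ofReal (lams n) ≠ ⊤ := by
      have hle : (∑' n, ENNReal.ofReal (lams n)) ≤
          ∑' n, (Pbar (A n) + ENNReal.ofReal (ε / 2 / 2 ^ n)) :=
        ENNReal.tsum_le_tsum fun n => (hlt n).le
      rw [ENNReal.tsum_add, h2geo] at hle
      exact ne_top_of_le_ne_top (ENNReal.add_ne_top.2 ⟨htop, ENNReal.ofReal_ne_top⟩) hle
    have hsummable : Summable lams := by
      have h := ENNReal.summable_toReal hofsum
      exact h.congr fun n => ENNReal.toReal_ofReal (hpos n).le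
    set tl : ℝ := ∑' n, lams n with htldef
    have htl_nonneg : 0 ≤ tl := tsum_nonneg fun n => (hpos n).le
    set lam : ℝ := ε + tl with hlamdef
    have hlampos : 0 < lam := by positivity
    set G : ℕ → SimpleStrategy := fun k => foldStrat (fun n => Hss n k) k with hGdef
    have hcapG : ∀ k (t : ℝ) (ω : PathSpace), capital (G k) t ω =
        ∑ n ∈ Finset.range (k + 1), capital (Hss n k) t ω :=
      fun k t ω => capital_foldStrat _ k t ω
    have hsum_le : ∀ k, ∑ n ∈ Finset.range (k + 1), lams n ≤ tl :=
      fun k => Summable.sum_le_tsum _ (fun n _ => (hpos n).le) hsummable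
    have hadmG : ∀ k (ω : PathSpace) (t : ℝ), ω ∈ OmegaQV → 0 ≤ t →
        -lam ≤ capital (G k) t ω := by
      intro k ω t hω ht
      rw [hcapG]
      have h1 : ∑ n ∈ Finset.range (k + 1), -(lams n) ≤
          ∑ n ∈ Finset.range (k + 1), capital (Hss n k) t ω :=
        Finset.sum_le_sum fun n _ => hadm n k ω t hω ht
      rw [Finset.sum_neg_distrib] at h1
      have h2 := hsum_le k
      linarith
    have hsupG : ∀ ω ∈ OmegaQV, ((⋃ n, A n).indicator (fun _ => (1 : EReal)) ω) ≤
        liminf (fun t : ℝ => liminf (fun k : ℕ =>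
          ((lam + capital (G k) t ω : ℝ) : EReal)) atTop) atTop := by
      intro ω hω
      by_cases hmem : ω ∈ ⋃ n, A n
      · obtain ⟨m, hm⟩ := Set.mem_iUnion.1 hmem
        rw [Set.indicator_of_mem hmem]
        have hkey : ∀ t : ℝ, 0 ≤ t → ∀ k, m ≤ k →
            ((lams m + capital (Hss m k) t ω : ℝ) : EReal) ≤
              ((lam + capital (G k) t ω : ℝ) : EReal) := by
          intro t ht k hk
          rw [EReal.coe_le_coe_iff, hcapG]
          have hmmem : m ∈ Finset.range (k + 1) := Finset.mem_range.2 (by omega)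
          rw [← Finset.add_sum_erase _ _ hmmem]
          have h1 : ∑ n ∈ (Finset.range (k + 1)).erase m, -(lams n) ≤
              ∑ n ∈ (Finset.range (k + 1)).erase m, capital (Hss n k) t ω :=
            Finset.sum_le_sum fun n _ => hadm n k ω t hω ht
          rw [Finset.sum_neg_distrib] at h1
          have h3 : lams m + ∑ n ∈ (Finset.range (k + 1)).erase m, lams n =
              ∑ n ∈ Finset.range (k + 1), lams n := Finset.add_sum_erase _ _ hmmem
          have h4 := hsum_le k
          linarith
        have houter : liminf (fun t : ℝ => liminf (fun k : ℕ =>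
            ((lams m + capital (Hss m k) t ω : ℝ) : EReal)) atTop) atTop ≤
            liminf (fun t : ℝ => liminf (fun k : ℕ =>
              ((lam + capital (G k) t ω : ℝ) : EReal)) atTop) atTop := by
          have hev : ∀ᶠ t : ℝ in atTop,
              liminf (fun k : ℕ => ((lams m + capital (Hss m k) t ω : ℝ) : EReal)) atTop ≤
              liminf (fun k : ℕ => ((lam + capital (G k) t ω : ℝ) : EReal)) atTop := by
            filter_upwards [eventually_ge_atTop (0 : ℝ)] with t ht
            have hev2 : ∀ᶠ k : ℕ in atTop,
                ((lams m + capital (Hss m k) t ω : ℝ) : EReal) ≤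
                ((lam + capital (G k) t ω : ℝ) : EReal) := by
              filter_upwards [eventually_ge_atTop m] with k hk
              exact hkey t ht k hk
            exact liminf_le_liminf hev2
          exact liminf_le_liminf hev
        calc (1 : EReal) = (A m).indicator (fun _ => (1 : EReal)) ω :=
              (Set.indicator_of_mem hm (fun _ => (1 : EReal))).symm
          _ ≤ _ := hsup m ω hω
          _ ≤ _ := houter
      · rw [Set.indicator_of_notMem hmem]
        have h1 : ∀ᶠ t : ℝ in atTop, (0 : EReal) ≤
            liminf (fun k : ℕ => ((lam + capital (G k) t ω : ℝ) : EReal)) atTop := by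
          filter_upwards [eventually_ge_atTop (0 : ℝ)] with t ht
          have h2 : ∀ᶠ k : ℕ in atTop,
              (0 : EReal) ≤ ((lam + capital (G k) t ω : ℝ) : EReal) := by
            filter_upwards with k
            rw [← EReal.coe_zero, EReal.coe_le_coe_iff]
            have := hadmG k ω t hω ht
            linarith
          exact le_liminf_of_le (h := h2)
        exact le_liminf_of_le (h := h1)
    have hεε : ε + ε = (η : ℝ) := by
      rw [hεdef]
      ring
    calc Pbar (⋃ n, A n) ≤ ENNReal.ofReal lam := Pbar_le _ hlampos G hadmG hsupG
      _ = ENNReal.ofReal ε + ENNReal.ofReal tl := ENNReal.ofReal_add hε.le htl_nonneg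
      _ = ENNReal.ofReal ε + ∑' n, ENNReal.ofReal (lams n) := by
          rw [ENNReal.ofReal_tsum_of_nonneg (fun n => (hpos n).le) hsummable]
      _ ≤ ENNReal.ofReal ε + ∑' n, (Pbar (A n) + ENNReal.ofReal (ε / 2 / 2 ^ n)) :=
          add_le_add_right (ENNReal.tsum_le_tsum fun n => (hlt n).le) _
      _ = ENNReal.ofReal ε + ((∑' n, Pbar (A n)) + ENNReal.ofReal ε) := by
          rw [ENNReal.tsum_add, h2geo]
      _ = (∑' n, Pbar (A n)) + (ENNReal.ofReal ε + ENNReal.ofReal ε) := by ring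
      _ = (∑' n, Pbar (A n)) + ENNReal.ofReal ((η : ℝ)) := by
          rw [← ENNReal.ofReal_add hε.le hε.le, hεε]
      _ = (∑' n, Pbar (A n)) + η := by rw [ENNReal.ofReal_coe_nnreal]
  exact ⟨fun A A' _ _ h => hmono A A' h, fun A _ => hsub A, hempty, hmass⟩

end RF
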